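/- arXiv:2503.20329 — 2 statements merged into one kernel-verified Lean document; each statement's English description precedes it below -/
import Mathlib

section
/- Let G be a connected finite simple graph and A ⊆ E(G) an edge subset with y_G = y_G(A). Then every connected component F of G − A is an induced subgraph of G (i.e., F equals the subgraph of G induced by V(F)), and y_F = 1. In particular, if G − A has exactly one component F, then F = G, y_G = 1, A = ∅, and c(G − A) = 1. -/
open SimpleGraph

/-- The number of connected components of a graph. -/
noncomputable def numComp {V : Type*} (G : SimpleGraph V) : ℕ :=
  Nat.card G.ConnectedComponent

/-- `y_G(A) = 2 c(G - A) - |A| - 1`. -/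
noncomputable def yVal {V : Type*} (G : SimpleGraph V) (A : Set (Sym2 V)) : ℤ :=
  2 * (numComp (G.deleteEdges A) : ℤ) - (A.ncard : ℤ) - 1

/-- `y_G = max_{A ⊆ E(G)} y_G(A)`. -/
noncomputable def yMax {V : Type*} (G : SimpleGraph V) : ℤ :=
  sSup { y : ℤ | ∃ A ⊆ G.edgeSet, yVal G A = y }


/-!
Deleting from an optimal `A` an edge whose ends lie in one component of `G - A` keeps
`c(G - A)` and lowers `|A|`, so it would raise `y_G(A)`; hence no edge of `A` lies inside a
component, i.e. every component `F` is induced. For `B ⊆ E(F)`, deleting `A ∪ B` splits `F` into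
the `c(F - B)` components of `F - B` and leaves the other components alone, so
`y_G(A ∪ B) = y_G(A) + y_F(B) - 1`, and maximality of `A` gives `y_F(B) ≤ 1 = y_F(∅)`.
If `c(G - A) = 1`, then `y_G(A) = 1 - |A|` while `y_G(∅) = 1`, forcing `A = ∅`.
-/

section

variable {V : Type*}

namespace SimpleGraph

variable {G : SimpleGraph V}

lemma Reachable.of_forall_adj_reachable {H : SimpleGraph V}
    (h : ∀ ⦃u v⦄, G.Adj u v → H.Reachable u v) {u v : V} (huv : G.Reachable u v) :
    H.Reachable u v := by
  simp only [reachable_iff_reflTransGen] at huv h ⊢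
  exact Relation.ReflTransGen.lift' id h _ _ huv

lemma reachable_deleteEdges_sdiff_singleton_iff {A : Set (Sym2 V)} {u v : V}
    (huv : (G.deleteEdges A).Reachable u v) {x y : V} :
    (G.deleteEdges (A \ {s(u, v)})).Reachable x y ↔ (G.deleteEdges A).Reachable x y := by
  refine ⟨Reachable.of_forall_adj_reachable fun a b hab => ?_,
    Reachable.mono (deleteEdges_anti Set.sdiff_subset)⟩
  rw [deleteEdges_adj] at hab
  by_cases hA : s(a, b) ∈ A
  · have : s(a, b) = s(u, v) := by by_contra hne; exact hab.2 ⟨hA, hne⟩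
    rcases Sym2.eq_iff.mp this with ⟨rfl, rfl⟩ | ⟨rfl, rfl⟩
    exacts [huv, huv.symm]
  · exact (deleteEdges_adj.mpr ⟨hab.1, hA⟩).reachable

section Closed

variable {s : Set V}

lemma Reachable.mem_of_closed (hs : ∀ ⦃u v⦄, G.Adj u v → u ∈ s → v ∈ s) {u v : V}
    (huv : G.Reachable u v) (hu : u ∈ s) : v ∈ s := by
  rw [reachable_iff_reflTransGen] at huv
  induction huv with
  | refl => exact hu
  | tail _ hadj ih => exact hs hadj ih

lemma Reachable.induce_of_closed (hs : ∀ ⦃u v⦄, G.Adj u v → u ∈ s → v ∈ s) {u v : V}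
    (huv : G.Reachable u v) (hu : u ∈ s) (hv : v ∈ s) :
    (G.induce s).Reachable ⟨u, hu⟩ ⟨v, hv⟩ := by
  obtain ⟨p⟩ := huv
  induction p with
  | nil => rfl
  | cons hadj _ ih =>
    exact (show (G.induce s).Adj ⟨_, hu⟩ ⟨_, hs hadj hu⟩ from hadj).reachable.trans (ih _ hv)

end Closed

lemma map_val_image_subset_edgeSet {s : Set V} {B : Set (Sym2 s)}
    (hB : B ⊆ (G.induce s).edgeSet) : Sym2.map (↑) '' B ⊆ G.edgeSet :=
  Set.image_subset_iff.mpr fun _ he => (Embedding.induce s).toHom.map_mem_edgeSet (hB he)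

lemma induce_supp_deleteEdges_eq {A : Set (Sym2 V)}
    (hA : ∀ ⦃u v⦄, (G.deleteEdges A).Reachable u v → s(u, v) ∉ A)
    (c : (G.deleteEdges A).ConnectedComponent) :
    (G.deleteEdges A).induce c.supp = G.induce c.supp := by
  ext u v
  simp only [comap_adj, Function.Embedding.subtype_apply, deleteEdges_adj, and_iff_left_iff_imp]
  exact fun _ => hA (c.reachable_of_mem_supp u.2 v.2)

end SimpleGraph

variable {G : SimpleGraph V}

lemma numComp_congr {H : SimpleGraph V} (h : ∀ u v, G.Reachable u v ↔ H.Reachable u v) :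
    numComp G = numComp H :=
  Nat.card_congr (Quot.congrRight h)

lemma numComp_eq_one_of_connected (h : G.Connected) : numComp G = 1 :=
  Nat.card_eq_one_iff_unique.mpr
    ⟨h.preconnected.subsingleton_connectedComponent, h.nonempty.map G.connectedComponentMk⟩

lemma numComp_le_card [Finite V] (G : SimpleGraph V) : numComp G ≤ Nat.card V :=
  Nat.card_le_card_of_surjective G.connectedComponentMk fun c => c.exists_rep

theorem numComp_eq_add_of_closed [Finite V] {s : Set V}
    (hs : ∀ ⦃u v⦄, G.Adj u v → u ∈ s → v ∈ s) :
    numComp G = numComp (G.induce s) + numComp (G.induce sᶜ) := by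
  have hsc : ∀ ⦃u v⦄, G.Adj u v → u ∈ sᶜ → v ∈ sᶜ := fun _ _ huv hu hv => hu (hs huv.symm hv)
  let g := Sum.elim (ConnectedComponent.map (Embedding.induce (G := G) s).toHom)
    (ConnectedComponent.map (Embedding.induce (G := G) sᶜ).toHom)
  have hg : Function.Bijective g := by
    refine ⟨?_, fun c => c.ind fun v => ?_⟩
    · rintro (c | c) (d | d) h <;>
        induction c using ConnectedComponent.ind with | h u => ?_ <;>
        induction d using ConnectedComponent.ind with | h w => ?_ <;>
        simp only [g, Sum.elim_inl, Sum.elim_inr, ConnectedComponent.map_mk,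
          ConnectedComponent.eq] at h
      · exact congrArg _ (ConnectedComponent.sound (h.induce_of_closed hs u.2 w.2))
      · exact absurd (h.mem_of_closed hs u.2) w.2
      · exact absurd (h.symm.mem_of_closed hs w.2) u.2
      · exact congrArg _ (ConnectedComponent.sound (h.induce_of_closed hsc u.2 w.2))
    · by_cases hv : v ∈ s
      exacts [⟨.inl ((G.induce s).connectedComponentMk ⟨v, hv⟩), rfl⟩,
        ⟨.inr ((G.induce sᶜ).connectedComponentMk ⟨v, hv⟩), rfl⟩]
  rw [numComp, numComp, numComp, ← Nat.card_sum, Nat.card_congr (Equiv.ofBijective g hg)]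

theorem numComp_deleteEdges_image_add_one [Finite V] (c : G.ConnectedComponent)
    (B : Set (Sym2 c.supp)) :
    numComp (G.deleteEdges (Sym2.map (↑) '' B)) + 1
      = numComp G + numComp ((G.induce c.supp).deleteEdges B) := by
  have hs : ∀ ⦃u v⦄, G.Adj u v → u ∈ c.supp → v ∈ c.supp :=
    fun _ _ huv => (c.mem_supp_congr_adj huv).mp
  have hin : (G.deleteEdges (Sym2.map (↑) '' B)).induce c.supp
      = (G.induce c.supp).deleteEdges B := by
    ext u v
    simp only [comap_adj, Function.Embedding.subtype_apply, deleteEdges_adj, ← Sym2.map_mk,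
      (Sym2.map.injective Subtype.val_injective).mem_set_image]
  have hout : (G.deleteEdges (Sym2.map (↑) '' B)).induce c.suppᶜ = G.induce c.suppᶜ := by
    ext ⟨u, hu⟩ v
    simp only [comap_adj, Function.Embedding.subtype_apply, deleteEdges_adj, and_iff_left_iff_imp]
    rintro - ⟨e, -, he⟩
    obtain ⟨w, -, rfl⟩ := Sym2.mem_map.mp (he ▸ Sym2.mem_mk_left u v)
    exact hu w.2
  rw [numComp_eq_add_of_closed hs, numComp_eq_add_of_closed (s := c.supp)
    fun _ _ huv => hs (deleteEdges_le _ huv), hin, hout,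
    numComp_eq_one_of_connected (G := G.induce c.supp) c.connected_toSimpleGraph]
  omega

lemma yVal_le_yMax [Finite V] {S : Set (Sym2 V)} (hS : S ⊆ G.edgeSet) : yVal G S ≤ yMax G := by
  refine le_csSup ⟨2 * Nat.card V, ?_⟩ ⟨S, hS, rfl⟩
  rintro _ ⟨B, -, rfl⟩
  have := numComp_le_card (G.deleteEdges B)
  unfold yVal
  omega

lemma yVal_empty_of_connected (hG : G.Connected) : yVal G ∅ = 1 := by
  simp [yVal, numComp_eq_one_of_connected hG]

lemma yMax_eq_one (hG : G.Connected) (h : ∀ B ⊆ G.edgeSet, yVal G B ≤ 1) : yMax G = 1 :=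
  IsGreatest.csSup_eq ⟨⟨∅, Set.empty_subset _, yVal_empty_of_connected hG⟩,
    by rintro _ ⟨B, hB, rfl⟩; exact h B hB⟩

lemma yVal_sdiff_singleton [Finite V] {A : Set (Sym2 V)} {u v : V}
    (huv : (G.deleteEdges A).Reachable u v) (he : s(u, v) ∈ A) :
    yVal G (A \ {s(u, v)}) = yVal G A + 1 := by
  have hc := numComp_congr fun _ _ => reachable_deleteEdges_sdiff_singleton_iff huv
  have hn := Set.ncard_sdiff_singleton_add_one he
  unfold yVal
  omega

theorem notMem_of_yMax_eq_yVal [Finite V] {A : Set (Sym2 V)} (hA : A ⊆ G.edgeSet)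
    (hy : yMax G = yVal G A) {u v : V} (huv : (G.deleteEdges A).Reachable u v) :
    s(u, v) ∉ A := fun he => by
  have := yVal_le_yMax (Set.sdiff_subset.trans hA : A \ {s(u, v)} ⊆ G.edgeSet)
  rw [yVal_sdiff_singleton huv he, hy] at this
  omega

theorem yVal_union_map_val_image [Finite V] (A : Set (Sym2 V))
    (c : (G.deleteEdges A).ConnectedComponent) {B : Set (Sym2 c.supp)}
    (hB : B ⊆ ((G.deleteEdges A).induce c.supp).edgeSet) :
    yVal G (A ∪ Sym2.map (↑) '' B)
      = yVal G A + yVal ((G.deleteEdges A).induce c.supp) B - 1 := by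
  have hBA := map_val_image_subset_edgeSet hB
  rw [edgeSet_deleteEdges] at hBA
  have hcard := Set.ncard_union_eq (Set.disjoint_of_subset_right hBA Set.disjoint_sdiff_right)
  have himg := Set.ncard_image_of_injective B (Sym2.map.injective Subtype.val_injective)
  have hcomp := numComp_deleteEdges_image_add_one c B
  rw [deleteEdges_deleteEdges] at hcomp
  unfold yVal
  omega

theorem yMax_induce_supp_eq_one [Finite V] {A : Set (Sym2 V)} (hA : A ⊆ G.edgeSet)
    (hy : yMax G = yVal G A) (c : (G.deleteEdges A).ConnectedComponent) :
    yMax ((G.deleteEdges A).induce c.supp) = 1 := by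
  refine yMax_eq_one c.connected_toSimpleGraph fun B hB => ?_
  have hsub : A ∪ Sym2.map (↑) '' B ⊆ G.edgeSet := Set.union_subset hA
    ((map_val_image_subset_edgeSet hB).trans (edgeSet_mono (deleteEdges_le _)))
  have := yVal_le_yMax hsub
  rw [yVal_union_map_val_image A c hB, hy] at this
  omega

end

/-- If `A` attains `y_G`, then every connected component `F` of `G - A` is an induced
subgraph of `G` and `y_F = 1`; and if `G - A` has exactly one component, then
`G - A = G`, `y_G = 1`, `A = ∅` and `c(G - A) = 1`. -/
theorem components_induced_of_yMax_attained {V : Type*} [Finite V]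
    (G : SimpleGraph V) (hG : G.Connected)
    (A : Set (Sym2 V)) (hA : A ⊆ G.edgeSet) (hy : yMax G = yVal G A) :
    (∀ c : (G.deleteEdges A).ConnectedComponent,
        (G.deleteEdges A).induce c.supp = G.induce c.supp ∧
        yMax ((G.deleteEdges A).induce c.supp) = 1) ∧
    (numComp (G.deleteEdges A) = 1 →
        G.deleteEdges A = G ∧ yMax G = 1 ∧ A = ∅ ∧ numComp (G.deleteEdges A) = 1) := by
  refine ⟨fun c => ⟨induce_supp_deleteEdges_eq (fun _ _ => notMem_of_yMax_eq_yVal hA hy) c,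
    yMax_induce_supp_eq_one hA hy c⟩, fun h1 => ?_⟩
  have hA0 : A = ∅ := by
    have := yVal_le_yMax (Set.empty_subset G.edgeSet)
    rw [yVal_empty_of_connected hG, hy, yVal, h1] at this
    exact (Set.ncard_eq_zero A.toFinite).mp (by omega)
  subst hA0
  exact ⟨deleteEdges_empty, hy.trans (yVal_empty_of_connected hG), rfl, h1⟩
end

section
/- Let n ≥ 2 be an even integer. Then for the path P_n on n vertices, y_{P_n} = n = 2·χ(P_n^c), and, if n ≥ 4, for the cycle C_n on n vertices, y_{C_n} = n − 1 = 2·χ(C_n^c) − 1, where χ denotes the chromatic number and ^c the graph complement. -/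
open SimpleGraph

/-!
Deleting one edge raises the number of components by at most one, so for connected `G` we get
`c(G - A) ≤ |A| + 1`, whence `y_G(A) ≤ |A| + 1` and `y_G(A) ≤ c(G - A)`. For a tree the first
bound is attained at `A = E(G)`, giving `y = |V|`. If `|E| = |V|`, then `A = E(G)` gives
`|V| - 1`, and any other `A` leaves an edge of `G - A`, so `c(G - A) ≤ |V| - 1`.

The colour classes of `Gᶜ` are cliques of `G`; for triangle-free `G ⊇ P_n` (as `P_n` and even
`C_n`) they have at most two vertices, and pairing `2i` with `2i + 1` gives a colouring with
`n / 2` colours.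
-/

namespace SimpleGraph

variable {V : Type*} {G : SimpleGraph V}

theorem Reachable.reachable_deleteEdges_singleton_or {x y : V} (a b : V) (h : G.Reachable x y) :
    (G.deleteEdges {s(a, b)}).Reachable x y ∨ (G.deleteEdges {s(a, b)}).Reachable x a ∨
      (G.deleteEdges {s(a, b)}).Reachable x b := by
  obtain ⟨p⟩ := h
  induction p with
  | nil => exact .inl .rfl
  | @cons x z y hxz _ ih =>
    by_cases he : s(x, z) = s(a, b)
    · rcases Sym2.eq_iff.mp he with ⟨rfl, -⟩ | ⟨rfl, -⟩
      · exact .inr (.inl .rfl)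
      · exact .inr (.inr .rfl)
    · have hxz' : (G.deleteEdges {s(a, b)}).Adj x z := by simp [hxz, he]
      exact ih.imp hxz'.reachable.trans (Or.imp hxz'.reachable.trans hxz'.reachable.trans)

theorem numComp_deleteEdges_singleton_le [Finite V] (G : SimpleGraph V) (e : Sym2 V) :
    numComp (G.deleteEdges {e}) ≤ numComp G + 1 := by
  induction e using Sym2.ind with
  | _ a b =>
  set G' := G.deleteEdges {s(a, b)}
  let ψ : G'.ConnectedComponent → G.ConnectedComponent :=
    ConnectedComponent.map (Hom.ofLE (deleteEdges_le _))
  -- Vertices of two components merged by `ψ` reach `a` or `b` in `G'`;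
  -- away from the component of `a`, both reach `b`.
  have hψ : Set.InjOn ψ (Set.univ \ {G'.connectedComponentMk a}) := by
    simp only [Set.InjOn, Set.mem_sdiff, Set.mem_univ, Set.mem_singleton_iff, true_and,
      ConnectedComponent.forall]
    intro x hx y hy hxy
    simp only [ψ, ConnectedComponent.map_mk, Hom.ofLE_apply, ConnectedComponent.eq] at hxy hx hy ⊢
    rcases hxy.reachable_deleteEdges_singleton_or a b with hxy' | hxa | hxb
    · exact hxy'
    · exact absurd hxa hx
    rcases hxy.symm.reachable_deleteEdges_singleton_or a b with hyx | hya | hyb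
    · exact hyx.symm
    · exact absurd hya hy
    · exact hxb.trans hyb.symm
  have hcard := Set.ncard_le_ncard_of_injOn ψ (fun _ _ => Set.mem_univ _) hψ
  have hsplit := Set.ncard_sdiff_singleton_add_one (Set.mem_univ (G'.connectedComponentMk a))
  rw [Set.ncard_univ] at hcard hsplit
  unfold numComp
  omega

theorem numComp_deleteEdges_le [Finite V] (G : SimpleGraph V) (A : Set (Sym2 V)) :
    numComp (G.deleteEdges A) ≤ numComp G + A.ncard := by
  induction A, A.toFinite using Set.Finite.induction_on with
  | empty => simp
  | @insert e A he hA ih =>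
    rw [Set.ncard_insert_of_notMem he hA, Set.insert_eq, Set.union_comm,
      ← deleteEdges_deleteEdges]
    have := numComp_deleteEdges_singleton_le (G.deleteEdges A) e
    omega

theorem Connected.numComp_eq_one (hG : G.Connected) : numComp G = 1 :=
  have := hG.preconnected.subsingleton_connectedComponent
  have := hG.nonempty.map G.connectedComponentMk
  Nat.card_unique

theorem numComp_bot : numComp (⊥ : SimpleGraph V) = Nat.card V :=
  (Nat.card_eq_of_bijective _ ⟨fun _ _ h => reachable_bot.mp (ConnectedComponent.exact h),
    Quot.mk_surjective⟩).symm

theorem numComp_lt_card_of_adj [Finite V] {a b : V} (hab : G.Adj a b) :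
    numComp G < Nat.card V := by
  classical
  have := Fintype.ofFinite V
  rw [numComp, Nat.card_eq_fintype_card, Nat.card_eq_fintype_card]
  refine Fintype.card_lt_of_surjective_not_injective _ Quot.mk_surjective fun hinj => hab.ne ?_
  exact hinj (ConnectedComponent.sound hab.reachable)

theorem yMax_eq_of_forall_yVal_le {m : ℤ} (hle : ∀ A ⊆ G.edgeSet, yVal G A ≤ m)
    {A₀ : Set (Sym2 V)} (hA₀ : A₀ ⊆ G.edgeSet) (hm : yVal G A₀ = m) : yMax G = m :=
  IsGreatest.csSup_eq ⟨⟨A₀, hA₀, hm⟩, by rintro _ ⟨A, hA, rfl⟩; exact hle A hA⟩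

theorem yVal_edgeSet (G : SimpleGraph V) :
    yVal G G.edgeSet = 2 * Nat.card V - Nat.card G.edgeSet - 1 := by
  rw [yVal, deleteEdges_edgeSet, sdiff_self, numComp_bot, Nat.card_coe_set_eq]

section Finite

variable [Finite V]

theorem Connected.numComp_deleteEdges_le (hG : G.Connected) (A : Set (Sym2 V)) :
    numComp (G.deleteEdges A) ≤ A.ncard + 1 := by
  simpa [hG.numComp_eq_one, add_comm] using G.numComp_deleteEdges_le A

theorem Connected.yVal_le_numComp (hG : G.Connected) (A : Set (Sym2 V)) :
    yVal G A ≤ numComp (G.deleteEdges A) := by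
  have := hG.numComp_deleteEdges_le A
  rw [yVal]
  omega

theorem Connected.yVal_le_ncard_add_one (hG : G.Connected) (A : Set (Sym2 V)) :
    yVal G A ≤ A.ncard + 1 := by
  have := hG.numComp_deleteEdges_le A
  rw [yVal]
  omega

theorem IsTree.yMax_eq (hG : G.IsTree) : yMax G = Nat.card V := by
  have hE := (isTree_iff_connected_and_card.mp hG).2
  refine yMax_eq_of_forall_yVal_le (fun A hA => ?_) subset_rfl (by rw [yVal_edgeSet]; omega)
  have := Set.ncard_le_ncard hA
  rw [← Nat.card_coe_set_eq G.edgeSet] at this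
  have := hG.connected.yVal_le_ncard_add_one A
  omega

theorem Connected.yMax_eq_of_card_edgeSet_eq (hG : G.Connected)
    (hE : Nat.card G.edgeSet = Nat.card V) : yMax G = Nat.card V - 1 := by
  refine yMax_eq_of_forall_yVal_le (fun A hA => ?_) subset_rfl (by rw [yVal_edgeSet]; omega)
  obtain rfl | ⟨e, heG, heA⟩ := hA.eq_or_ssubset.imp id Set.exists_of_ssubset
  · rw [yVal_edgeSet]; omega
  induction e using Sym2.ind with
  | _ a b =>
  have hab : (G.deleteEdges A).Adj a b := by simpa [heA] using heG
  have := numComp_lt_card_of_adj hab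
  have := hG.yVal_le_numComp A
  omega

end Finite

theorem edgeSet_pathGraph_succ (n : ℕ) :
    (pathGraph (n + 1)).edgeSet = Set.range fun i : Fin n => s(i.castSucc, i.succ) := by
  ext e
  induction e using Sym2.ind with
  | _ u v =>
  simp only [mem_edgeSet, pathGraph_adj, Set.mem_range, Sym2.eq_iff, Fin.ext_iff,
    Fin.val_castSucc, Fin.val_succ]
  constructor
  · rintro (h | h)
    · exact ⟨⟨u, by omega⟩, .inl ⟨rfl, h⟩⟩
    · exact ⟨⟨v, by omega⟩, .inr ⟨rfl, h⟩⟩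
  · rintro ⟨i, h | h⟩ <;> omega

theorem isTree_pathGraph (n : ℕ) : (pathGraph (n + 1)).IsTree := by
  refine isTree_iff_connected_and_card.mpr ⟨pathGraph_connected n, ?_⟩
  rw [Nat.card_coe_set_eq, edgeSet_pathGraph_succ, Set.ncard_range_of_injective, Nat.card_fin,
    Nat.card_fin]
  intro i j hij
  simp only [Sym2.eq_iff, Fin.ext_iff, Fin.val_castSucc, Fin.val_succ] at hij
  ext
  omega

theorem card_edgeSet_cycleGraph (n : ℕ) : Nat.card (cycleGraph (n + 3)).edgeSet = n + 3 := by
  have := (cycleGraph (n + 3)).sum_degrees_eq_twice_card_edges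
  simp only [cycleGraph_degree_three_le, Finset.sum_const, Finset.card_univ, Fintype.card_fin,
    smul_eq_mul, edgeFinset_card] at this
  rw [Nat.card_eq_fintype_card]
  omega

theorem yMax_pathGraph {n : ℕ} (hn : n ≠ 0) : yMax (pathGraph n) = n := by
  obtain ⟨m, rfl⟩ := Nat.exists_eq_succ_of_ne_zero hn
  rw [(isTree_pathGraph m).yMax_eq, Nat.card_fin]

theorem yMax_cycleGraph {n : ℕ} (hn : 3 ≤ n) : yMax (cycleGraph n) = n - 1 := by
  obtain ⟨m, rfl⟩ := Nat.exists_eq_add_of_le' hn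
  have hE : Nat.card (cycleGraph (m + 3)).edgeSet = Nat.card (Fin (m + 3)) := by
    rw [card_edgeSet_cycleGraph, Nat.card_fin]
  rw [cycleGraph_connected.yMax_eq_of_card_edgeSet_eq hE, Nat.card_fin]

theorem CliqueFree.card_le_mul_of_colorable_compl [Fintype V] {r m : ℕ}
    (hG : G.CliqueFree (r + 1)) (hc : Gᶜ.Colorable m) : Fintype.card V ≤ r * m := by
  classical
  obtain ⟨C⟩ := hc
  have hclass : ∀ c ∈ (Finset.univ : Finset (Fin m)), Finset.card {v | C v = c} ≤ r := by
    intro c _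
    by_contra! hlt
    obtain ⟨t, hts, htc⟩ := Finset.exists_subset_card_eq (Nat.succ_le_of_lt hlt)
    have hclique : G.IsClique (C.colorClass c) :=
      (G.isIndepSet_compl).mp (C.isIndepSet_colorClass c)
    exact hG t ⟨hclique.subset fun v hv => by simpa [Coloring.colorClass] using hts hv, htc⟩
  simpa using Finset.card_le_mul_card_image_of_maps_to (fun v _ => Finset.mem_univ (C v)) r hclass

theorem colorable_compl_pathGraph (k : ℕ) : (pathGraph (k + k))ᶜ.Colorable k :=
  ⟨Coloring.mk (fun v => ⟨v / 2, by omega⟩) fun {u v} huv hc => by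
    simp only [compl_adj, pathGraph_adj, Fin.ext_iff] at huv hc
    omega⟩

theorem chromaticNumber_compl_eq_of_pathGraph_le {k : ℕ} {G : SimpleGraph (Fin (k + k))}
    (hP : pathGraph (k + k) ≤ G) (hG : G.CliqueFree 3) : Gᶜ.chromaticNumber = k := by
  refine le_antisymm ?_ (le_chromaticNumber_iff_colorable.mpr fun m hm => ?_)
  · exact ((colorable_compl_pathGraph k).mono_left
      (compl_le_compl_iff_le.mpr hP)).chromaticNumber_le
  · have := hG.card_le_mul_of_colorable_compl hm
    rw [Fintype.card_fin] at this
    exact_mod_cast (by omega : k ≤ m)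

theorem cliqueFree_three_cycleGraph_of_even {n : ℕ} (hn : Even n) : (cycleGraph n).CliqueFree 3 :=
  (cycleGraph.bicoloring_of_even n hn).colorable.cliqueFree (by simp)

theorem chromaticNumber_compl_pathGraph (k : ℕ) : (pathGraph (k + k))ᶜ.chromaticNumber = k :=
  chromaticNumber_compl_eq_of_pathGraph_le le_rfl
    ((cliqueFree_three_cycleGraph_of_even ⟨k, rfl⟩).anti pathGraph_le_cycleGraph)

theorem chromaticNumber_compl_cycleGraph (k : ℕ) : (cycleGraph (k + k))ᶜ.chromaticNumber = k :=
  chromaticNumber_compl_eq_of_pathGraph_le pathGraph_le_cycleGraph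
    (cliqueFree_three_cycleGraph_of_even ⟨k, rfl⟩)

end SimpleGraph

/-- For an even integer `n ≥ 2`, `y_{P_n} = n = 2 χ(P_nᶜ)`, and if moreover `n ≥ 4`,
`y_{C_n} = n - 1 = 2 χ(C_nᶜ) - 1`. -/
theorem yMax_pathGraph_and_cycleGraph_even (n : ℕ) (h2 : 2 ≤ n) (heven : Even n) :
    (yMax (SimpleGraph.pathGraph n) = (n : ℤ) ∧
      (n : ℤ) = 2 * (((SimpleGraph.pathGraph n)ᶜ).chromaticNumber.toNat : ℤ)) ∧
    (4 ≤ n →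
      yMax (SimpleGraph.cycleGraph n) = (n : ℤ) - 1 ∧
      (n : ℤ) - 1 = 2 * (((SimpleGraph.cycleGraph n)ᶜ).chromaticNumber.toNat : ℤ) - 1) := by
  obtain ⟨k, rfl⟩ := heven
  refine ⟨⟨yMax_pathGraph (by omega), ?_⟩, fun h4 => ⟨yMax_cycleGraph (by omega), ?_⟩⟩
  · rw [chromaticNumber_compl_pathGraph, ENat.toNat_natCast]
    push_cast
    ring
  · rw [chromaticNumber_compl_cycleGraph, ENat.toNat_natCast]
    push_cast
    ring
end
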